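/- Let Q be a key polynomial, ε := ε(Q), and h ∈ K[x] with deg(h) < deg(Q). For b ∈ ℕ and nonnegative integers b_0, ..., b_r with b_0 + ... + b_r = b (b_1,...,b_r ≥ 1), set T_b(b_0,...,b_r) := ∂_{b_0}h · (Π_{i=1}^r ∂_{b_i}Q) · Q^{n-r}. Then ν_Q(T_b(b_0,...,b_r)) ≥ ν(hQ^n) - bε, with strict inequality if b_0 > 0 or if some b_i ∉ I(Q). -/

import Mathlib

open Polynomial
open scoped Classical
noncomputable section

/-- `ν` is (the restriction to nonzero polynomials of) a valuation on `K[x]`,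
nontrivial on `K`, with `ν(x) ≥ 0`.  Values are taken in a linearly ordered
field `Γ` (playing the role of the divisible hull of the value group). -/
structure IsVal {K : Type*} [Field K] {Γ : Type*} [Field Γ] [LinearOrder Γ] [IsStrictOrderedRing Γ]
    (ν : Polynomial K → Γ) : Prop where
  map_mul : ∀ f g : Polynomial K, f ≠ 0 → g ≠ 0 → ν (f * g) = ν f + ν g
  map_add : ∀ f g : Polynomial K, f ≠ 0 → g ≠ 0 → f + g ≠ 0 →
    min (ν f) (ν g) ≤ ν (f + g)
  nontrivial : ∃ a : K, a ≠ 0 ∧ ν (C a) ≠ 0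
  nonneg_x : 0 ≤ ν X

/-- `ε(f) = max_{b ≥ 1, ∂_b f ≠ 0} (ν(f) - ν(∂_b f))/b`, where `∂_b` is the
`b`-th formal (Hasse) derivative.  (Terms with `∂_b f = 0` correspond to the
value `-∞` and are omitted from the maximum.) -/
noncomputable def eps {K : Type*} [Field K] {Γ : Type*} [Field Γ] [LinearOrder Γ] [IsStrictOrderedRing Γ]
    (ν : Polynomial K → Γ) (f : Polynomial K) : Γ :=
  if h : ((Finset.Icc 1 f.natDegree).filter
      fun b => Polynomial.hasseDeriv b f ≠ 0).Nonempty then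
    ((Finset.Icc 1 f.natDegree).filter
      fun b => Polynomial.hasseDeriv b f ≠ 0).sup' h
      fun b => (ν f - ν (Polynomial.hasseDeriv b f)) / (b : Γ)
  else 0

/-- A monic (nonconstant) polynomial `Q` is a key polynomial for `ν` if every
`f ∈ K[x]` with `ε(f) ≥ ε(Q)` satisfies `deg f ≥ deg Q`. -/
def IsKeyPol {K : Type*} [Field K] {Γ : Type*} [Field Γ] [LinearOrder Γ] [IsStrictOrderedRing Γ]
    (ν : Polynomial K → Γ) (Q : Polynomial K) : Prop :=
  Q.Monic ∧ 1 ≤ Q.natDegree ∧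
    ∀ f : Polynomial K, 1 ≤ f.natDegree → eps ν Q ≤ eps ν f →
      Q.natDegree ≤ f.natDegree

/-- The `i`-th coefficient `f_i` of the `q`-standard expansion
`f = Σ f_i q^i` (each `f_i = 0` or `deg f_i < deg q`), for `q` monic. -/
noncomputable def qCoeff {K : Type*} [Field K] (q f : Polynomial K) (i : ℕ) :
    Polynomial K :=
  (f /ₘ q ^ i) %ₘ q

/-- The `q`-truncation `ν_q(f) = min_i ν(f_i q^i)` of `ν`, the minimum taken
over the nonzero coefficients of the `q`-standard expansion of `f`. -/
noncomputable def truncVal {K : Type*} [Field K] {Γ : Type*}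
    [Field Γ] [LinearOrder Γ] [IsStrictOrderedRing Γ] (ν : Polynomial K → Γ) (q f : Polynomial K) : Γ :=
  if h : ((Finset.range (f.natDegree + 1)).filter
      fun i => qCoeff q f i ≠ 0).Nonempty then
    ((Finset.range (f.natDegree + 1)).filter
      fun i => qCoeff q f i ≠ 0).inf' h
      fun i => ν (qCoeff q f i * q ^ i)
  else 0

/-- `I(Q) = {b : (ν(Q) - ν(∂_b Q))/b = ε(Q)}`. -/
def Iset {K : Type*} [Field K] {Γ : Type*} [Field Γ] [LinearOrder Γ] [IsStrictOrderedRing Γ]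
    (ν : Polynomial K → Γ) (Q : Polynomial K) : Set ℕ :=
  {b | 1 ≤ b ∧ Polynomial.hasseDeriv b Q ≠ 0 ∧
    (ν Q - ν (Polynomial.hasseDeriv b Q)) / (b : Γ) = eps ν Q}

/-- `S_Q(f) = {i : ν(f_i Q^i) = ν_Q(f)}` (over nonzero coefficients). -/
def Sset {K : Type*} [Field K] {Γ : Type*} [Field Γ] [LinearOrder Γ] [IsStrictOrderedRing Γ]
    (ν : Polynomial K → Γ) (q f : Polynomial K) : Set ℕ :=
  {i | qCoeff q f i ≠ 0 ∧ ν (qCoeff q f i * q ^ i) = truncVal ν q f}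

/-!
Multiplying the factors of `T` one at a time, every intermediate product is written as
`Σ D_k Q ^ k` with `deg D_k < deg Q` and all terms of value at least the sum of the values of the
factors so far; since such an expansion is the `Q`-standard one, `ν_Q(T)` is at least
`ν(∂_{b₀} h) + Σ ν(∂_{bᵢ} Q) + (n - r) ν(Q)`. The multiplication step rests on the key-polynomial
property: for `f, g` of degree `< deg Q`, write `fg = a + Q c` by division by `Q`. If
`ν(Q c) < ν(fg)`, then `ν(a) ≥ ν(Q c)`, and for `b ∈ I(Q)` the term `∂_b Q ⬝ c` of
`∂_b(fg) = ∂_b a + ∂_b(Q c)` has value `ν(Q c) - b ε(Q)` while all other terms have strictly larger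
value, because `ε(f), ε(g), ε(a), ε(c) < ε(Q)`. Hence `ν(a), ν(Q c) ≥ ν(fg)`. The final bounds are
`ν(∂_b f) ≥ ν(f) - b ε(Q)` for `deg f < deg Q` (strict if `b > 0`) and
`ν(∂_b Q) ≥ ν(Q) - b ε(Q)` (strict if `b ∉ I(Q)`).
-/

open Finset

section

variable {K : Type*} [Field K] {Γ : Type*} [Field Γ] [LinearOrder Γ] [IsStrictOrderedRing Γ]
  {ν : K[X] → Γ} {Q : K[X]}

theorem le_natDegree_of_hasseDeriv_ne_zero {R : Type*} [Semiring R] {f : R[X]} {b : ℕ}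
    (hD : hasseDeriv b f ≠ 0) : b ≤ f.natDegree := by
  by_contra! hlt
  exact hD (hasseDeriv_eq_zero_of_lt_natDegree f b hlt)

theorem mem_degreeLT_of_natDegree_lt {R : Type*} [Semiring R] {p : R[X]} {n : ℕ}
    (h : p.natDegree < n) : p ∈ degreeLT R n := by
  rcases eq_or_ne p 0 with rfl | hp
  · exact zero_mem _
  exact mem_degreeLT.2 ((natDegree_lt_iff_degree_lt hp).1 h)

theorem divByMonic_mul {R : Type*} [CommRing R] {p q : R[X]} (hp : p.Monic) (hq : q.Monic)
    (f : R[X]) : f /ₘ (p * q) = f /ₘ p /ₘ q := by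
  nontriviality R
  refine (div_modByMonic_unique _ (f %ₘ p + p * (f /ₘ p %ₘ q)) (hp.mul hq) ⟨?_, ?_⟩).1
  · conv_rhs => rw [← modByMonic_add_div f p, ← modByMonic_add_div (f /ₘ p) q]
    ring
  · rw [hq.degree_mul]
    refine (degree_add_le _ _).trans_lt (max_lt ?_ ?_)
    · exact (degree_modByMonic_lt f hp).trans_le
        (le_add_of_nonneg_right (zero_le_degree_iff.2 hq.ne_zero))
    · rw [hp.degree_mul_comm, hp.degree_mul, add_comm]
      exact WithBot.add_lt_add_left (degree_eq_bot.not.2 hp.ne_zero) (degree_modByMonic_lt _ hq)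

theorem qCoeff_succ (hQ : Q.Monic) (f : K[X]) (k : ℕ) :
    qCoeff Q f (k + 1) = qCoeff Q (f /ₘ Q) k := by
  rw [qCoeff, qCoeff, pow_succ', divByMonic_mul hQ (hQ.pow k)]

theorem qCoeff_eval (hQ : Q.Monic) {D : K[X][X]}
    (hD : ∀ k, D.coeff k ∈ degreeLT K Q.natDegree) (k : ℕ) :
    qCoeff Q (D.eval Q) k = D.coeff k := by
  have hsplit : ∀ D : K[X][X], (∀ k, D.coeff k ∈ degreeLT K Q.natDegree) →
      D.eval Q /ₘ Q = D.divX.eval Q ∧ D.eval Q %ₘ Q = D.coeff 0 := fun D hD => by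
    refine div_modByMonic_unique _ _ hQ ⟨?_, ?_⟩
    · conv_rhs => rw [← divX_mul_X_add D]
      simp only [eval_add, eval_mul, eval_X, eval_C]
      ring
    · rw [degree_eq_natDegree hQ.ne_zero]
      exact mem_degreeLT.1 (hD 0)
  induction k generalizing D with
  | zero => rw [qCoeff, pow_zero, divByMonic_one, (hsplit D hD).2]
  | succ k ih =>
    rw [qCoeff_succ hQ, (hsplit D hD).1, ih fun j => by rw [coeff_divX]; exact hD _, coeff_divX]

theorem le_natDegree_of_qCoeff_ne_zero (hQ : Q.Monic) (hQ1 : 1 ≤ Q.natDegree) {f : K[X]}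
    {k : ℕ} (h : qCoeff Q f k ≠ 0) : k ≤ f.natDegree := by
  have hdiv : f /ₘ Q ^ k ≠ 0 := fun h0 => h (by rw [qCoeff, h0, zero_modByMonic])
  rw [Ne, divByMonic_eq_zero_iff (hQ.pow k), not_lt] at hdiv
  have := natDegree_le_natDegree hdiv
  rw [hQ.natDegree_pow] at this
  nlinarith

namespace IsVal

theorem map_one (hν : IsVal ν) : ν 1 = 0 := by
  have h := hν.map_mul 1 1 one_ne_zero one_ne_zero
  rw [one_mul] at h
  linarith

theorem map_neg (hν : IsVal ν) (f : K[X]) : ν (-f) = ν f := by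
  rcases eq_or_ne f 0 with rfl | hf
  · rw [neg_zero]
  have h := hν.map_mul (-1) (-1) (by simp) (by simp)
  rw [neg_mul_neg, one_mul, hν.map_one] at h
  rw [← neg_one_mul, hν.map_mul _ _ (by simp) hf]
  linarith

theorem map_mul_pow (hν : IsVal ν) {f g : K[X]} (hf : f ≠ 0) (hg : g ≠ 0) (k : ℕ) :
    ν (f * g ^ k) = ν f + k * ν g := by
  induction k with
  | zero => simp
  | succ k ih =>
    rw [pow_succ, ← mul_assoc, hν.map_mul _ _ (mul_ne_zero hf (pow_ne_zero k hg)) hg, ih]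
    push_cast
    ring

def upperAddSubgroup (hν : IsVal ν) (S : UpperSet Γ) : AddSubgroup K[X] where
  carrier := {f | f ≠ 0 → ν f ∈ S}
  zero_mem' h := (h rfl).elim
  add_mem' {f g} hf hg hfg := by
    rcases eq_or_ne f 0 with rfl | hf0
    · rw [zero_add] at hfg ⊢
      exact hg hfg
    rcases eq_or_ne g 0 with rfl | hg0
    · rw [add_zero] at hfg ⊢
      exact hf hfg
    refine S.upper (hν.map_add f g hf0 hg0 hfg) ?_
    rcases min_choice (ν f) (ν g) with h | h <;> rw [h]
    exacts [hf hf0, hg hg0]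
  neg_mem' {f} hf hf0 := by
    show ν (-f) ∈ S
    rw [hν.map_neg]
    exact hf (neg_ne_zero.mp hf0)

end IsVal

theorem sub_div_le_eps (ν : K[X] → Γ) {f : K[X]} {b : ℕ} (hb : 1 ≤ b)
    (hD : hasseDeriv b f ≠ 0) : (ν f - ν (hasseDeriv b f)) / b ≤ eps ν f := by
  have hmem : b ∈ (Icc 1 f.natDegree).filter fun b => hasseDeriv b f ≠ 0 :=
    mem_filter.2 ⟨mem_Icc.2 ⟨hb, le_natDegree_of_hasseDeriv_ne_zero hD⟩, hD⟩
  rw [eps, dif_pos ⟨b, hmem⟩]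
  exact le_sup' (fun b => (ν f - ν (hasseDeriv b f)) / (b : Γ)) hmem

theorem sub_mul_eps_self_le_val_hasseDeriv (ν : K[X] → Γ) {f : K[X]} {b : ℕ}
    (hD : hasseDeriv b f ≠ 0) : ν f - b * eps ν f ≤ ν (hasseDeriv b f) := by
  rcases Nat.eq_zero_or_pos b with rfl | hb
  · simp
  have h := sub_div_le_eps ν hb hD
  rw [div_le_iff₀ (by exact_mod_cast hb)] at h
  linarith

theorem sub_mul_eps_lt_val_hasseDeriv_of_notMem_Iset {b : ℕ} (hb : 1 ≤ b)
    (hD : hasseDeriv b Q ≠ 0) (hI : b ∉ Iset ν Q) :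
    ν Q - b * eps ν Q < ν (hasseDeriv b Q) := by
  have h := lt_of_le_of_ne (sub_div_le_eps ν hb hD) fun h => hI ⟨hb, hD, h⟩
  rw [div_lt_iff₀ (by exact_mod_cast hb)] at h
  linarith

theorem val_hasseDeriv_of_mem_Iset {b : ℕ} (hb : b ∈ Iset ν Q) :
    ν (hasseDeriv b Q) = ν Q - b * eps ν Q := by
  obtain ⟨hb1, -, hε⟩ := hb
  rw [div_eq_iff (by positivity)] at hε
  linarith

namespace IsKeyPol

theorem exists_mem_Iset (hQ : IsKeyPol ν Q) : ∃ b, b ∈ Iset ν Q := by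
  have htop : hasseDeriv Q.natDegree Q ≠ 0 := by
    intro h0
    have h := congrArg (coeff · 0) h0
    simp [hasseDeriv_coeff, hQ.1.coeff_natDegree] at h
  have hmem : Q.natDegree ∈ (Icc 1 Q.natDegree).filter fun b => hasseDeriv b Q ≠ 0 :=
    mem_filter.2 ⟨mem_Icc.2 ⟨hQ.2.1, le_rfl⟩, htop⟩
  obtain ⟨b, hb, hmax⟩ :=
    exists_mem_eq_sup' ⟨_, hmem⟩ fun b => (ν Q - ν (hasseDeriv b Q)) / (b : Γ)
  obtain ⟨hbIcc, hbD⟩ := mem_filter.1 hb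
  exact ⟨b, (mem_Icc.1 hbIcc).1, hbD, by rw [eps, dif_pos ⟨_, hmem⟩, hmax]⟩

theorem eps_lt {f : K[X]} (hQ : IsKeyPol ν Q) (hf : 1 ≤ f.natDegree)
    (hfQ : f.natDegree < Q.natDegree) : eps ν f < eps ν Q :=
  lt_of_not_ge fun h => (hQ.2.2 f hf h).not_gt hfQ

theorem sub_mul_eps_lt_val_hasseDeriv {f : K[X]} (hQ : IsKeyPol ν Q)
    (hfQ : f.natDegree < Q.natDegree) {b : ℕ} (hb : 1 ≤ b) (hD : hasseDeriv b f ≠ 0) :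
    ν f - b * eps ν Q < ν (hasseDeriv b f) := by
  have hε := hQ.eps_lt (hb.trans (le_natDegree_of_hasseDeriv_ne_zero hD)) hfQ
  have hbpos : (0 : Γ) < b := by exact_mod_cast hb
  calc ν f - b * eps ν Q < ν f - b * eps ν f := by gcongr
    _ ≤ ν (hasseDeriv b f) := sub_mul_eps_self_le_val_hasseDeriv ν hD

theorem sub_mul_eps_le_val_hasseDeriv {f : K[X]} (hQ : IsKeyPol ν Q)
    (hfQ : f.natDegree < Q.natDegree) {b : ℕ} (hD : hasseDeriv b f ≠ 0) :
    ν f - b * eps ν Q ≤ ν (hasseDeriv b f) := by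
  rcases Nat.eq_zero_or_pos b with rfl | hb
  · simp
  exact (hQ.sub_mul_eps_lt_val_hasseDeriv hfQ hb hD).le

theorem sub_mul_eps_le_val_hasseDeriv_mul (hν : IsVal ν) (hQ : IsKeyPol ν Q) {f g : K[X]}
    (hf0 : f ≠ 0) (hg0 : g ≠ 0) (hf : f.natDegree < Q.natDegree)
    (hg : g.natDegree < Q.natDegree) {b : ℕ} (hD : hasseDeriv b (f * g) ≠ 0) :
    ν (f * g) - b * eps ν Q ≤ ν (hasseDeriv b (f * g)) := by
  suffices hmem :
      hasseDeriv b (f * g) ∈ hν.upperAddSubgroup (.Ici (ν (f * g) - b * eps ν Q)) from hmem hD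
  rw [hasseDeriv_mul]
  refine sum_mem fun ij hij h0 => ?_
  have hi := hQ.sub_mul_eps_le_val_hasseDeriv hf (left_ne_zero_of_mul h0)
  have hj := hQ.sub_mul_eps_le_val_hasseDeriv hg (right_ne_zero_of_mul h0)
  have hb : (b : Γ) = ij.1 + ij.2 := by rw [← mem_antidiagonal.1 hij]; push_cast; rfl
  rw [UpperSet.mem_Ici_iff, hν.map_mul _ _ hf0 hg0,
    hν.map_mul _ _ (left_ne_zero_of_mul h0) (right_ne_zero_of_mul h0), hb]
  linarith

theorem hasseDeriv_mul_sub_mem (hν : IsVal ν) (hQ : IsKeyPol ν Q) {g : K[X]}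
    (hg : g.natDegree < Q.natDegree) (b : ℕ) :
    hasseDeriv b (Q * g) - hasseDeriv b Q * g ∈
      hν.upperAddSubgroup (.Ioi (ν Q + ν g - b * eps ν Q)) := by
  have hb0 : (b, 0) ∈ antidiagonal b := mem_antidiagonal.2 (add_zero b)
  rw [hasseDeriv_mul, ← add_sum_erase _ _ hb0, hasseDeriv_zero', add_sub_cancel_left]
  refine sum_mem fun ij hij h0 => ?_
  obtain ⟨hne, hij⟩ := mem_erase.1 hij
  have hsum := mem_antidiagonal.1 hij
  have hj : 1 ≤ ij.2 := by
    rcases ij with ⟨i, j⟩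
    simp only [ne_eq, Prod.mk.injEq] at hsum hne ⊢
    omega
  have hi := sub_mul_eps_self_le_val_hasseDeriv ν (left_ne_zero_of_mul h0)
  have hj := hQ.sub_mul_eps_lt_val_hasseDeriv hg hj (right_ne_zero_of_mul h0)
  have hb : (b : Γ) = ij.1 + ij.2 := by rw [← hsum]; push_cast; rfl
  rw [UpperSet.mem_Ioi_iff, hν.map_mul _ _ (left_ne_zero_of_mul h0) (right_ne_zero_of_mul h0),
    hb]
  linarith

theorem val_le_val_mul_divByMonic (hν : IsVal ν) (hQ : IsKeyPol ν Q) {F : K[X]}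
    (hF : ∀ b, hasseDeriv b F ≠ 0 → ν F - b * eps ν Q ≤ ν (hasseDeriv b F))
    (hdeg : (F /ₘ Q).natDegree < Q.natDegree) (hc : F /ₘ Q ≠ 0) :
    ν F ≤ ν (Q * (F /ₘ Q)) := by
  set c := F /ₘ Q
  have hQ0 : Q ≠ 0 := hQ.1.ne_zero
  by_contra! hlt
  have ha : F %ₘ Q ∈ hν.upperAddSubgroup (.Ici (ν (Q * c))) := by
    rw [eq_sub_of_add_eq (modByMonic_add_div F Q)]
    exact sub_mem (fun _ => hlt.le) fun _ => le_rfl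
  obtain ⟨b, hbI⟩ := hQ.exists_mem_Iset
  have hbν := val_hasseDeriv_of_mem_Iset hbI
  obtain ⟨hb, hbQ, -⟩ := hbI
  have hval : ν (hasseDeriv b Q * c) = ν (Q * c) - b * eps ν Q := by
    rw [hν.map_mul _ _ hbQ hc, hν.map_mul _ _ hQ0 hc, hbν]
    ring
  have hsplit : hasseDeriv b Q * c = hasseDeriv b F - hasseDeriv b (F %ₘ Q) -
      (hasseDeriv b (Q * c) - hasseDeriv b Q * c) := by
    have hF' : hasseDeriv b F = hasseDeriv b (F %ₘ Q) + hasseDeriv b (Q * c) := by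
      rw [← map_add, modByMonic_add_div]
    rw [hF']
    ring
  -- other terms of `∂_b F = ∂_b (F %ₘ Q) + ∂_b (Q c)` have value above `ν (∂_b Q ⬝ c)`
  have hmem : hasseDeriv b Q * c ∈ hν.upperAddSubgroup (.Ioi (ν (Q * c) - b * eps ν Q)) := by
    rw [hsplit]
    refine sub_mem (sub_mem (fun hD => ?_) (fun hD => ?_)) ?_
    · have := hF b hD
      rw [UpperSet.mem_Ioi_iff]
      linarith
    · have ha0 : F %ₘ Q ≠ 0 := fun h => hD (by rw [h, map_zero])
      have := hQ.sub_mul_eps_lt_val_hasseDeriv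
        (natDegree_lt_natDegree ha0 (degree_modByMonic_lt F hQ.1)) hb hD
      have := ha ha0
      rw [UpperSet.mem_Ici_iff] at this
      rw [UpperSet.mem_Ioi_iff]
      linarith
    · rw [hν.map_mul _ _ hQ0 hc]
      exact hQ.hasseDeriv_mul_sub_mem hν hdeg b
  exact (hmem (mul_ne_zero hbQ hc)).ne' hval

theorem val_le_val_modByMonic (hν : IsVal ν) (hQ : IsKeyPol ν Q) {F : K[X]}
    (hF : ∀ b, hasseDeriv b F ≠ 0 → ν F - b * eps ν Q ≤ ν (hasseDeriv b F))
    (hdeg : (F /ₘ Q).natDegree < Q.natDegree) (ha : F %ₘ Q ≠ 0) :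
    ν F ≤ ν (F %ₘ Q) := by
  have hQc : Q * (F /ₘ Q) ∈ hν.upperAddSubgroup (.Ici (ν F)) := fun h =>
    hQ.val_le_val_mul_divByMonic hν hF hdeg (right_ne_zero_of_mul h)
  suffices hmem : F %ₘ Q ∈ hν.upperAddSubgroup (.Ici (ν F)) from hmem ha
  rw [eq_sub_of_add_eq (modByMonic_add_div F Q)]
  exact sub_mem (fun _ => le_refl (ν F)) hQc

end IsKeyPol

namespace IsVal

/-- Polynomials `f = Σ D_k Q ^ k` with `deg D_k < deg Q` and every term of value at least `t`.
By `qCoeff_eval` the `D_k` are the coefficients of the `Q`-standard expansion of `f`. -/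
def qExpansionGE (hν : IsVal ν) (Q : K[X]) (t : Γ) : AddSubmonoid K[X] where
  carrier := {f | ∃ D : K[X][X], D.eval Q = f ∧ ∀ k,
    D.coeff k ∈ degreeLT K Q.natDegree ∧ D.coeff k * Q ^ k ∈ hν.upperAddSubgroup (.Ici t)}
  zero_mem' := ⟨0, eval_zero, fun k => by
    rw [coeff_zero, zero_mul]
    exact ⟨zero_mem _, zero_mem _⟩⟩
  add_mem' := by
    rintro _ _ ⟨D, rfl, hD⟩ ⟨E, rfl, hE⟩
    refine ⟨D + E, eval_add, fun k => ?_⟩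
    rw [coeff_add, add_mul]
    exact ⟨add_mem (hD k).1 (hE k).1, add_mem (hD k).2 (hE k).2⟩

theorem term_mem_qExpansionGE (hν : IsVal ν) {d : K[X]} (hd : d ∈ degreeLT K Q.natDegree)
    {k : ℕ} {t : Γ} (ht : d * Q ^ k ≠ 0 → t ≤ ν (d * Q ^ k)) :
    d * Q ^ k ∈ hν.qExpansionGE Q t := by
  refine ⟨monomial k d, eval_monomial, fun j => ?_⟩
  rw [coeff_monomial]
  split_ifs with h
  · subst h
    exact ⟨hd, ht⟩
  · rw [zero_mul]
    exact ⟨zero_mem _, zero_mem _⟩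

theorem mul_mem_qExpansionGE_of_terms (hν : IsVal ν) {g f : K[X]} {t s : Γ}
    (hterm : ∀ d k, d ∈ degreeLT K Q.natDegree →
      (d * Q ^ k ≠ 0 → t ≤ ν (d * Q ^ k)) → g * (d * Q ^ k) ∈ hν.qExpansionGE Q s)
    (hf : f ∈ hν.qExpansionGE Q t) : g * f ∈ hν.qExpansionGE Q s := by
  obtain ⟨D, rfl, hD⟩ := hf
  rw [eval_eq_sum_range, mul_sum]
  exact sum_mem fun k _ => hterm _ _ (hD k).1 (hD k).2

theorem pow_mul_mem_qExpansionGE (hν : IsVal ν) (hQ : Q ≠ 0) {f : K[X]} {t : Γ}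
    (hf : f ∈ hν.qExpansionGE Q t) (e : ℕ) :
    Q ^ e * f ∈ hν.qExpansionGE Q (e * ν Q + t) := by
  refine hν.mul_mem_qExpansionGE_of_terms (fun d k hd ht => ?_) hf
  rw [mul_left_comm, ← pow_add]
  refine hν.term_mem_qExpansionGE hd fun h0 => ?_
  have hd0 : d ≠ 0 := left_ne_zero_of_mul h0
  have := ht (mul_ne_zero hd0 (pow_ne_zero k hQ))
  rw [hν.map_mul_pow hd0 hQ] at this ⊢
  push_cast
  linarith

theorem le_truncVal_of_mem_qExpansionGE (hν : IsVal ν) (hQ : Q.Monic) (hQ1 : 1 ≤ Q.natDegree)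
    {f : K[X]} (hf : f ≠ 0) {t : Γ} (hmem : f ∈ hν.qExpansionGE Q t) :
    t ≤ truncVal ν Q f := by
  obtain ⟨D, rfl, hD⟩ := hmem
  have hcoeff := qCoeff_eval hQ fun k => (hD k).1
  obtain ⟨k, hk⟩ : ∃ k, D.coeff k ≠ 0 := by
    by_contra! h
    have hD0 : D = 0 := Polynomial.ext fun n => by rw [h n, coeff_zero]
    exact hf (by rw [hD0, eval_zero])
  have hne :
      ((range ((D.eval Q).natDegree + 1)).filter fun i => qCoeff Q (D.eval Q) i ≠ 0).Nonempty :=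
    ⟨k, mem_filter.2 ⟨mem_range.2 (Nat.lt_succ_of_le
      (le_natDegree_of_qCoeff_ne_zero hQ hQ1 (by rwa [hcoeff]))), by rwa [hcoeff]⟩⟩
  rw [truncVal, dif_pos hne]
  refine le_inf' _ _ fun i hi => ?_
  have hi0 := (mem_filter.1 hi).2
  rw [hcoeff] at hi0 ⊢
  exact (hD i).2 (mul_ne_zero hi0 (pow_ne_zero i hQ.ne_zero))

end IsVal

namespace IsKeyPol

theorem mul_term_mem_qExpansionGE (hν : IsVal ν) (hQ : IsKeyPol ν Q) {p d : K[X]} (hp : p ≠ 0)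
    (hpQ : p.natDegree < Q.natDegree) (hd : d ∈ degreeLT K Q.natDegree) {k : ℕ} {t : Γ}
    (ht : d * Q ^ k ≠ 0 → t ≤ ν (d * Q ^ k)) :
    p * (d * Q ^ k) ∈ hν.qExpansionGE Q (ν p + t) := by
  rcases eq_or_ne d 0 with rfl | hd0
  · rw [zero_mul, mul_zero]
    exact zero_mem _
  have hQ0 : Q ≠ 0 := hQ.1.ne_zero
  have hdQ : d.natDegree < Q.natDegree :=
    (natDegree_lt_iff_degree_lt hd0).2 (mem_degreeLT.1 hd)
  have hbound : ν p + t ≤ ν (p * d) + k * ν Q := by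
    have := ht (mul_ne_zero hd0 (pow_ne_zero k hQ0))
    rw [hν.map_mul_pow hd0 hQ0] at this
    rw [hν.map_mul _ _ hp hd0]
    linarith
  have hF := fun b => hQ.sub_mul_eps_le_val_hasseDeriv_mul hν hp hd0 hpQ hdQ (b := b)
  have hdiv : (p * d /ₘ Q).natDegree < Q.natDegree := by
    rw [natDegree_divByMonic _ hQ.1, natDegree_mul hp hd0]
    omega
  have hsplit : p * (d * Q ^ k) = (p * d %ₘ Q) * Q ^ k + (p * d /ₘ Q) * Q ^ (k + 1) := by
    conv_lhs => rw [← mul_assoc, ← modByMonic_add_div (p * d) Q]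
    ring
  rw [hsplit]
  refine add_mem (hν.term_mem_qExpansionGE ?_ fun h0 => ?_)
    (hν.term_mem_qExpansionGE (mem_degreeLT_of_natDegree_lt hdiv) fun h0 => ?_)
  · rw [mem_degreeLT, ← degree_eq_natDegree hQ0]
    exact degree_modByMonic_lt _ hQ.1
  · have ha0 := left_ne_zero_of_mul h0
    have := hQ.val_le_val_modByMonic hν hF hdiv ha0
    rw [hν.map_mul_pow ha0 hQ0]
    linarith
  · have hc0 := left_ne_zero_of_mul h0
    have := hQ.val_le_val_mul_divByMonic hν hF hdiv hc0
    rw [pow_succ', ← mul_assoc, mul_comm _ Q, hν.map_mul_pow (mul_ne_zero hQ0 hc0) hQ0]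
    linarith

theorem mul_mem_qExpansionGE (hν : IsVal ν) (hQ : IsKeyPol ν Q) {p f : K[X]} (hp : p ≠ 0)
    (hpQ : p.natDegree < Q.natDegree) {t : Γ} (hf : f ∈ hν.qExpansionGE Q t) :
    p * f ∈ hν.qExpansionGE Q (ν p + t) :=
  hν.mul_mem_qExpansionGE_of_terms
    (fun _ _ hd ht => hQ.mul_term_mem_qExpansionGE hν hp hpQ hd ht) hf

theorem prod_mem_qExpansionGE (hν : IsVal ν) (hQ : IsKeyPol ν Q) {ι : Type*} (s : Finset ι)
    {p : ι → K[X]} (hp : ∀ i ∈ s, p i ≠ 0)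
    (hpQ : ∀ i ∈ s, (p i).natDegree < Q.natDegree) :
    ∏ i ∈ s, p i ∈ hν.qExpansionGE Q (∑ i ∈ s, ν (p i)) := by
  induction s using Finset.cons_induction with
  | empty =>
    simpa using hν.term_mem_qExpansionGE (d := 1) (k := 0)
      (mem_degreeLT_of_natDegree_lt (by rw [natDegree_one]; exact hQ.2.1))
      fun _ => by simp [hν.map_one]
  | cons a s ha ih =>
    rw [prod_cons, sum_cons]
    exact hQ.mul_mem_qExpansionGE hν (hp a (mem_cons_self a s)) (hpQ a (mem_cons_self a s))
      (ih (fun i hi => hp i (mem_cons_of_mem hi)) fun i hi => hpQ i (mem_cons_of_mem hi))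

theorem le_truncVal_mul_prod_mul_pow (hν : IsVal ν) (hQ : IsKeyPol ν Q) {p : K[X]}
    (hp : p ≠ 0) (hpQ : p.natDegree < Q.natDegree) {ι : Type*} (s : Finset ι) {q : ι → K[X]}
    (hq : ∀ i ∈ s, q i ≠ 0) (hqQ : ∀ i ∈ s, (q i).natDegree < Q.natDegree) (e : ℕ) :
    e * ν Q + (ν p + ∑ i ∈ s, ν (q i)) ≤
      truncVal ν Q (p * (∏ i ∈ s, q i) * Q ^ e) := by
  have hmem := hν.pow_mul_mem_qExpansionGE hQ.1.ne_zero
    (hQ.mul_mem_qExpansionGE hν hp hpQ (hQ.prod_mem_qExpansionGE hν s hq hqQ)) e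
  rw [mul_comm (Q ^ e)] at hmem
  refine hν.le_truncVal_of_mem_qExpansionGE hQ.1 hQ.2.1 ?_ hmem
  exact mul_ne_zero (mul_ne_zero hp (prod_ne_zero_iff.2 hq)) (pow_ne_zero e hQ.1.ne_zero)

end IsKeyPol

end

variable {K : Type*} [Field K] {Γ : Type*} [Field Γ] [LinearOrder Γ] [IsStrictOrderedRing Γ]

/-- For a key polynomial `Q`, `h` with `deg h < deg Q`, and
`T = ∂_{b₀}h ⬝ (Π_{i=1}^r ∂_{b_i}Q) ⬝ Q^{n-r}` with `b₀ + b₁ + ⋯ + b_r = b`,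
one has `ν_Q(T) ≥ ν(h Q^n) - b ε(Q)`, with strict inequality if `b₀ > 0` or
some `b_i ∉ I(Q)`. -/
theorem truncVal_T_ge (ν : Polynomial K → Γ) (hν : IsVal ν)
    (Q : Polynomial K) (hQ : IsKeyPol ν Q) (h : Polynomial K) (hh : h ≠ 0)
    (hdeg : h.natDegree < Q.natDegree) (n r : ℕ) (hrn : r ≤ n)
    (b0 : ℕ) (bs : Fin r → ℕ) (hbs : ∀ i, 1 ≤ bs i) (b : ℕ)
    (hb : b0 + ∑ i, bs i = b)
    (hT : Polynomial.hasseDeriv b0 h *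
      (∏ i, Polynomial.hasseDeriv (bs i) Q) * Q ^ (n - r) ≠ 0) :
    ν (h * Q ^ n) - (b : Γ) * eps ν Q ≤
      truncVal ν Q (Polynomial.hasseDeriv b0 h *
        (∏ i, Polynomial.hasseDeriv (bs i) Q) * Q ^ (n - r)) ∧
    ((0 < b0 ∨ ∃ i, bs i ∉ Iset ν Q) →
      ν (h * Q ^ n) - (b : Γ) * eps ν Q <
        truncVal ν Q (Polynomial.hasseDeriv b0 h *
          (∏ i, Polynomial.hasseDeriv (bs i) Q) * Q ^ (n - r))) := by
  have hQ0 : Q ≠ 0 := hQ.1.ne_zero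
  have hD0 : hasseDeriv b0 h ≠ 0 := left_ne_zero_of_mul (left_ne_zero_of_mul hT)
  have hDQ : ∀ i, hasseDeriv (bs i) Q ≠ 0 := fun i =>
    prod_ne_zero_iff.1 (right_ne_zero_of_mul (left_ne_zero_of_mul hT)) i (mem_univ i)
  have hlow := hQ.le_truncVal_mul_prod_mul_pow hν hD0
    ((natDegree_hasseDeriv_le h b0).trans_lt (by omega)) univ (fun i _ => hDQ i)
    (fun i _ => (natDegree_hasseDeriv_le Q (bs i)).trans_lt (Nat.sub_lt (by omega) (hbs i)))
    (n - r)
  have hval : ν (h * Q ^ n) - b * eps ν Q = ((n - r : ℕ) : Γ) * ν Q +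
      (ν h - b0 * eps ν Q + ∑ i, (ν Q - bs i * eps ν Q)) := by
    rw [hν.map_mul_pow hh hQ0, ← hb, Nat.cast_sub hrn, sum_sub_distrib, ← sum_mul, sum_const,
      card_univ, Fintype.card_fin, nsmul_eq_mul]
    push_cast
    ring
  have h0 := hQ.sub_mul_eps_le_val_hasseDeriv hdeg hD0
  have hi := fun i => sub_mul_eps_self_le_val_hasseDeriv ν (hDQ i)
  rw [hval]
  refine ⟨hlow.trans' (by gcongr with i; exact hi i), fun hstrict => hlow.trans_lt' ?_⟩
  refine (add_lt_add_iff_left _).2 ?_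
  rcases hstrict with hb0 | ⟨j, hj⟩
  · exact add_lt_add_of_lt_of_le (hQ.sub_mul_eps_lt_val_hasseDeriv hdeg hb0 hD0)
      (sum_le_sum fun i _ => hi i)
  · exact add_lt_add_of_le_of_lt h0 (sum_lt_sum (fun i _ => hi i)
      ⟨j, mem_univ j, sub_mul_eps_lt_val_hasseDeriv_of_notMem_Iset (hbs j) (hDQ j) hj⟩)
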